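/- arXiv:0805.3917 — 3 statements merged into one kernel-verified Lean document; each statement's English description precedes it below -/
import Mathlib

section
/- Let ⟨·,·⟩₀ be a positive semidefinite sesquilinear form on a complex vector space V, and let P : V → V be a linear map satisfying ⟨Pφ, Pφ⟩₀ = ⟨Pφ, φ⟩₀ for all φ ∈ V. Then P maps the kernel N = {φ : ⟨φ,φ⟩₀ = 0} into itself, and the induced operator on the quotient inner product space V/N is bounded with norm at most 1, self-adjoint, and idempotent (i.e., extends to an orthogonal projection on the Hilbert space completion). -/
open scoped InnerProductSpace ComplexConjugate

/-!
Read `B` as a pre-inner product on `V`. Over `ℂ` a sesquilinear form vanishing on the diagonal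
vanishes identically, so polarizing `⟪Pφ - φ, Pφ⟫ = 0` gives `⟪Pφ - φ, Pψ⟫ = 0` for all `φ, ψ`:
the range of `P` is orthogonal to the range of `P - 1`. This makes `P` symmetric, idempotent up
to null vectors, and a contraction, since `‖Pφ‖² = re ⟪φ, Pφ⟫ ≤ ‖φ‖ ‖Pφ‖`. All three properties
pass by density to the continuous extension of `P` to the completion of `V`, which is the
Hilbert space completion of `V ⧸ N`.
-/

theorem LinearMap.eq_zero_of_apply_self_eq_zero {M : Type*} [AddCommGroup M] [Module ℂ M]
    (f : M →ₗ⋆[ℂ] M →ₗ[ℂ] ℂ) (hf : ∀ x, f x x = 0) : f = 0 := by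
  ext x y
  rw [LinearMap.zero_apply, LinearMap.zero_apply]
  have h₁ := hf (x + y)
  have h₂ := hf (x + Complex.I • y)
  simp only [map_add, map_smulₛₗ, LinearMap.add_apply, LinearMap.smul_apply, smul_eq_mul,
    hf x, hf y, Complex.conj_I] at h₁ h₂
  linear_combination (h₁ - Complex.I * h₂) / 2 + (f x y - f y x) / 2 * Complex.I_sq

section PreInnerProductSpace

variable {V : Type*} [SeminormedAddCommGroup V] [InnerProductSpace ℂ V] {P : V →ₗ[ℂ] V}

theorem inner_map_sub_self_map_eq_zero (hP : ∀ x, ⟪P x, P x⟫_ℂ = ⟪x, P x⟫_ℂ) (x y : V) :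
    ⟪P x - x, P y⟫_ℂ = 0 := by
  have hform := LinearMap.eq_zero_of_apply_self_eq_zero
    (((innerₛₗ ℂ).comp (P - LinearMap.id)).compl₂ P) fun x => by
      simp only [LinearMap.compl₂_apply, LinearMap.comp_apply, innerₛₗ_apply_apply,
        LinearMap.sub_apply, LinearMap.id_apply, inner_sub_left, hP, sub_self]
  simpa only [LinearMap.compl₂_apply, LinearMap.comp_apply, innerₛₗ_apply_apply,
    LinearMap.sub_apply, LinearMap.id_apply, LinearMap.zero_apply] using
    LinearMap.congr_fun₂ hform x y

theorem inner_map_map_eq_inner_map_right (hP : ∀ x, ⟪P x, P x⟫_ℂ = ⟪x, P x⟫_ℂ) (x y : V) :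
    ⟪P x, P y⟫_ℂ = ⟪x, P y⟫_ℂ := by
  rw [← sub_eq_zero, ← inner_sub_left, inner_map_sub_self_map_eq_zero hP]

theorem LinearMap.isSymmetric_of_inner_map_self (hP : ∀ x, ⟪P x, P x⟫_ℂ = ⟪x, P x⟫_ℂ) :
    P.IsSymmetric := fun x y => by
  rw [← inner_conj_symm, ← inner_map_map_eq_inner_map_right hP y x, inner_conj_symm,
    inner_map_map_eq_inner_map_right hP]

theorem norm_map_le_of_inner_map_self (hP : ∀ x, ⟪P x, P x⟫_ℂ = ⟪x, P x⟫_ℂ) (x : V) :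
    ‖P x‖ ≤ ‖x‖ := by
  have h : ‖P x‖ * ‖P x‖ ≤ ‖x‖ * ‖P x‖ :=
    calc ‖P x‖ * ‖P x‖ = RCLike.re ⟪x, P x⟫_ℂ := by rw [← hP, ← norm_sq_eq_re_inner, sq]
      _ ≤ ‖⟪x, P x⟫_ℂ‖ := RCLike.re_le_norm _
      _ ≤ ‖x‖ * ‖P x‖ := norm_inner_le_norm _ _
  nlinarith [norm_nonneg x, norm_nonneg (P x)]

theorem norm_map_map_sub_map_eq_zero (hP : ∀ x, ⟪P x, P x⟫_ℂ = ⟪x, P x⟫_ℂ) (x : V) :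
    ‖P (P x) - P x‖ = 0 := by
  rw [@norm_eq_sqrt_re_inner ℂ, inner_sub_right, inner_map_sub_self_map_eq_zero hP,
    inner_map_sub_self_map_eq_zero hP]
  simp

end PreInnerProductSpace

namespace ContinuousLinearMap

open UniformSpace

section Normed

variable {𝕜 E F : Type*} [NontriviallyNormedField 𝕜] [SeminormedAddCommGroup E] [NormedSpace 𝕜 E]
  [SeminormedAddCommGroup F] [NormedSpace 𝕜 F]

theorem opNorm_completion_le (T : E →L[𝕜] F) : ‖T.completion‖ ≤ ‖T‖ := by
  refine opNorm_le_bound _ (norm_nonneg T) fun y => ?_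
  induction y using Completion.induction_on with
  | hp => exact isClosed_le (by fun_prop) (by fun_prop)
  | ih x => simpa only [completion_apply_coe, Completion.norm_coe] using T.le_opNorm x

theorem completion_mul_self {T : E →L[𝕜] E} (hT : ∀ x, ‖T (T x) - T x‖ = 0) :
    T.completion * T.completion = T.completion := by
  ext y
  induction y using Completion.induction_on with
  | hp => exact isClosed_eq (by fun_prop) (by fun_prop)
  | ih x =>
    change T.completion (T.completion x) = T.completion x
    rw [completion_apply_coe, completion_apply_coe, ← sub_eq_zero,
      ← Completion.coe_sub, ← norm_eq_zero, Completion.norm_coe, hT]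

end Normed

theorem isSelfAdjoint_completion {𝕜 E : Type*} [RCLike 𝕜] [SeminormedAddCommGroup E]
    [InnerProductSpace 𝕜 E] {T : E →L[𝕜] E} (hT : (T : E →ₗ[𝕜] E).IsSymmetric) :
    IsSelfAdjoint T.completion := by
  refine isSelfAdjoint_iff_isSymmetric.mpr fun x y => ?_
  induction x, y using Completion.induction_on₂ with
  | hp => exact isClosed_eq (by fun_prop) (by fun_prop)
  | ih a b =>
    simp only [coe_coe, completion_apply_coe, Completion.inner_coe]
    exact hT a b

end ContinuousLinearMap

/-- The arguments are swapped because `B` is linear in its first argument, whereas Mathlib's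
inner product is conjugate-linear in it. -/
abbrev PreInnerProductSpace.Core.ofHermitianForm {V : Type*} [AddCommGroup V] [Module ℂ V]
    (B : V → V → ℂ) (haddl : ∀ x x' y, B (x + x') y = B x y + B x' y)
    (hsmull : ∀ (c : ℂ) x y, B (c • x) y = c * B x y)
    (hherm : ∀ x y, B x y = starRingEnd ℂ (B y x)) (hpos : ∀ x, 0 ≤ (B x x).re) :
    PreInnerProductSpace.Core ℂ V where
  inner x y := B y x
  conj_inner_symm x y := (hherm y x).symm
  re_inner_nonneg := hpos
  add_left x y z := by
    change B z (x + y) = B z x + B z y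
    rw [hherm, haddl, map_add, ← hherm, ← hherm]
  smul_left x y r := by
    change B y (r • x) = conj r * B y x
    rw [hherm, hsmull, map_mul, ← hherm]

/-- If `⟨·,·⟩₀` is a positive semidefinite Hermitian sesquilinear form
(linear in the first entry) on a complex vector space `V` and `P : V → V` is linear with
`⟨Pφ, Pφ⟩₀ = ⟨Pφ, φ⟩₀` for all `φ`, then `P` preserves the null space `N`, and on the Hilbert
space completion of `V/N` it induces an orthogonal projection (a self-adjoint idempotent
of norm at most 1). -/
theorem semidef_form_projection
    {V : Type} [AddCommGroup V] [Module ℂ V]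
    (B : V → V → ℂ)
    (haddl : ∀ x x' y, B (x + x') y = B x y + B x' y)
    (hsmull : ∀ (c : ℂ) x y, B (c • x) y = c * B x y)
    (hherm : ∀ x y, B x y = starRingEnd ℂ (B y x))
    (hpos : ∀ x, 0 ≤ (B x x).re)
    (P : V →ₗ[ℂ] V)
    (hP : ∀ φ, B (P φ) (P φ) = B (P φ) φ) :
    (∀ φ, B φ φ = 0 → B (P φ) (P φ) = 0) ∧
    (∀ φ, (B (P φ) (P φ)).re ≤ (B φ φ).re) ∧
    (∀ φ ψ, B (P φ) ψ = B φ (P ψ)) ∧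
    (∀ φ, B (P (P φ) - P φ) (P (P φ) - P φ) = 0) ∧
    ∃ (E : Type) (_ : NormedAddCommGroup E) (_ : InnerProductSpace ℂ E) (_ : CompleteSpace E)
      (q : V →ₗ[ℂ] E), (∀ x y, ⟪q x, q y⟫_ℂ = B y x) ∧ DenseRange q ∧
      ∃ P' : E →L[ℂ] E, ‖P'‖ ≤ 1 ∧ IsSelfAdjoint P' ∧ P' * P' = P' ∧
        ∀ x, P' (q x) = q (P x) := by
  let core := PreInnerProductSpace.Core.ofHermitianForm B haddl hsmull hherm hpos
  let : SeminormedAddCommGroup V := InnerProductSpace.Core.toSeminormedAddCommGroup (𝕜 := ℂ)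
  let : InnerProductSpace ℂ V := InnerProductSpace.ofCore core
  replace hP : ∀ φ, ⟪P φ, P φ⟫_ℂ = ⟪φ, P φ⟫_ℂ := hP
  have hnorm := norm_map_le_of_inner_map_self hP
  have hsymm := P.isSymmetric_of_inner_map_self hP
  let T : V →L[ℂ] V := P.mkContinuous 1 fun x => by simpa using hnorm x
  refine ⟨fun φ hφ => ?_, fun φ => ?_, fun φ ψ => (hsymm ψ φ).symm, fun φ => ?_,
    UniformSpace.Completion V, inferInstance, inferInstance, inferInstance,
    UniformSpace.Completion.toComplL.toLinearMap, UniformSpace.Completion.inner_coe,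
    UniformSpace.Completion.denseRange_coe, T.completion,
    T.opNorm_completion_le.trans (P.mkContinuous_norm_le zero_le_one _),
    ContinuousLinearMap.isSelfAdjoint_completion hsymm,
    ContinuousLinearMap.completion_mul_self (norm_map_map_sub_map_eq_zero hP),
    T.completion_apply_coe⟩
  · change ⟪φ, φ⟫_ℂ = 0 at hφ
    change ⟪P φ, P φ⟫_ℂ = 0
    simp only [inner_self_eq_norm_sq_to_K, sq_eq_zero_iff, RCLike.ofReal_eq_zero] at hφ ⊢
    exact le_antisymm ((hnorm φ).trans_eq hφ) (norm_nonneg _)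
  · change RCLike.re ⟪P φ, P φ⟫_ℂ ≤ RCLike.re ⟪φ, φ⟫_ℂ
    rw [← norm_sq_eq_re_inner, ← norm_sq_eq_re_inner]
    exact pow_le_pow_left₀ (norm_nonneg _) (hnorm φ) 2
  · change ⟪P (P φ) - P φ, P (P φ) - P φ⟫_ℂ = 0
    rw [inner_self_eq_norm_sq_to_K, norm_map_map_sub_map_eq_zero hP]
    simp
end

section
/- Suppose the isometry W : H → H^σ intertwines an irreducible representation U with the induced representation L^σ, and W is of the form (Wv)(g) = Δ(g)^{-1/2} B U_g* C v for v ∈ dom C, where B : H → V is Hilbert–Schmidt with ‖B‖_HS = 1 and C is the Duflo–Moore operator. Then B intertwines U restricted to H-the-subgroup with σ, i.e., B U_h = σ_h B for all h in the compact subgroup H ⊂ G. -/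
open scoped InnerProductSpace ComplexConjugate
open MeasureTheory ContinuousLinearMap

noncomputable section

/-!
Write `ψ_v(g) = B U_g⁻¹ C v`, so that `W v = Δ^{-1/2} ψ_v` almost everywhere. Since `Δ` is trivial
on the compact subgroup `K` and `W v` lies in the range of `Π`, the continuous function `ψ_v` agrees
almost everywhere (right translations by `K` preserve Haar null sets), hence everywhere, with its
average `g ↦ ∫_K σ_h ψ_v(g h) dν(h)`. Left invariance of `ν` makes such averages `σ`-covariant,
which at `g⁻¹` reads `B U_h (U_g C v) = σ_h B (U_g C v)`. By irreducibility the vectors `U_g C v`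
span a dense subspace, so `B U_h = σ_h B`.
-/

open Filter Topology

theorem Continuous.clm_apply_of_strongly_continuous {𝕜 X K E F : Type*} [NormedField 𝕜]
    [TopologicalSpace X] [TopologicalSpace K] [SeminormedAddCommGroup E] [NormedSpace 𝕜 E]
    [SeminormedAddCommGroup F] [NormedSpace 𝕜 F] {σ : K → E →L[𝕜] F} {C : ℝ}
    (hσ : ∀ h x, ‖σ h x‖ ≤ C * ‖x‖) (hσcont : ∀ x, Continuous fun h => σ h x)
    {a : X → K} {ψ : X → E} (ha : Continuous a) (hψ : Continuous ψ) :
    Continuous fun x => σ (a x) (ψ x) := by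
  rw [continuous_iff_continuousAt]
  intro x₀
  have hsmall : Tendsto (fun x => σ (a x) (ψ x - ψ x₀)) (𝓝 x₀) (𝓝 0) := by
    refine squeeze_zero_norm (fun x => hσ _ _) ?_
    simpa using ((hψ.tendsto x₀).sub_const (ψ x₀)).norm.const_mul C
  have hfixed : Tendsto (fun x => σ (a x) (ψ x₀)) (𝓝 x₀) (𝓝 (σ (a x₀) (ψ x₀))) :=
    ((hσcont _).comp ha).tendsto x₀
  simpa [ContinuousAt] using hsmall.add hfixed

theorem eq_one_of_bddAbove_image_subgroup {G : Type*} [Group G] {Δ : G → ℝ}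
    (hpos : ∀ g, 0 < Δ g) (hmul : ∀ g g', Δ (g * g') = Δ g * Δ g') {K : Subgroup G}
    (hbdd : BddAbove (Δ '' K)) {h : G} (hh : h ∈ K) : Δ h = 1 := by
  have hone : Δ 1 = 1 := by
    have := hmul 1 1
    rw [mul_one] at this
    nlinarith [hpos 1]
  have hpow : ∀ k, ∀ n : ℕ, Δ (k ^ n) = Δ k ^ n := by
    intro k n
    induction n with
    | zero => simpa using hone
    | succ n ih => rw [pow_succ, pow_succ, hmul, ih]
  have hle : ∀ k ∈ K, Δ k ≤ 1 := by
    intro k hk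
    by_contra! hlt
    obtain ⟨M, hM⟩ := hbdd
    obtain ⟨n, hn⟩ := pow_unbounded_of_one_lt M hlt
    exact hn.not_ge (hpow k n ▸ hM ⟨k ^ n, K.pow_mem hk n, rfl⟩)
  have hinv : Δ h * Δ h⁻¹ = 1 := by rw [← hmul, mul_inv_cancel, hone]
  nlinarith [hle h hh, hle h⁻¹ (K.inv_mem hh), hpos h, hpos h⁻¹]

theorem dense_span_iUnion_image_of_irreducible {𝕜 G E : Type*} [NormedField 𝕜] [Monoid G]
    [SeminormedAddCommGroup E] [NormedSpace 𝕜 E] {U : G → E →L[𝕜] E}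
    (hUmul : ∀ g g', U (g * g') = U g * U g') (hUone : U 1 = 1)
    (hirr : ∀ S : Submodule 𝕜 E, IsClosed (S : Set E) →
      (∀ g, ∀ v ∈ S, U g v ∈ S) → S = ⊥ ∨ S = ⊤)
    {X : Set E} (hX : ∃ x ∈ X, x ≠ 0) :
    Dense (Submodule.span 𝕜 (⋃ g, U g '' X) : Set E) := by
  set S := Submodule.span 𝕜 (⋃ g, U g '' X)
  have hS : ∀ g, S.map (U g : E →ₗ[𝕜] E) ≤ S := by
    intro g
    rw [Submodule.map_span, Submodule.span_le]
    rintro _ ⟨_, hy, rfl⟩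
    obtain ⟨g', x, hx, rfl⟩ := Set.mem_iUnion.mp hy
    exact Submodule.subset_span (Set.mem_iUnion.mpr ⟨g * g', x, hx, by rw [hUmul]; rfl⟩)
  have hinv : ∀ g, ∀ v ∈ S.topologicalClosure, U g v ∈ S.topologicalClosure := by
    intro g v hv
    exact Submodule.topologicalClosure_mono (hS g)
      (S.topologicalClosure_map (U g) ⟨v, hv, rfl⟩)
  rw [Submodule.dense_iff_topologicalClosure_eq_top]
  refine (hirr _ S.isClosed_topologicalClosure hinv).resolve_left fun hbot => ?_
  obtain ⟨x, hx, hne⟩ := hX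
  have hxS : x ∈ S.topologicalClosure := S.le_topologicalClosure <|
    Submodule.subset_span (Set.mem_iUnion.mpr ⟨1, x, hx, by simp [hUone]⟩)
  exact hne (by simpa [hbot] using hxS)

theorem dense_span_iUnion_image_image_of_irreducible {𝕜 G E : Type*} [NormedField 𝕜] [Monoid G]
    [NormedAddCommGroup E] [NormedSpace 𝕜 E] {U : G → E →L[𝕜] E}
    (hUmul : ∀ g g', U (g * g') = U g * U g') (hUone : U 1 = 1)
    (hirr : ∀ S : Submodule 𝕜 E, IsClosed (S : Set E) →
      (∀ g, ∀ v ∈ S, U g v ∈ S) → S = ⊥ ∨ S = ⊤)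
    {D : Submodule 𝕜 E} (hD : Dense (D : Set E)) {C : E →ₗ[𝕜] E}
    (hC : ∀ v ∈ D, C v = 0 → v = 0) :
    Dense (Submodule.span 𝕜 (⋃ g, U g '' (C '' D)) : Set E) := by
  rcases subsingleton_or_nontrivial E with hE | hE
  · rw [Submodule.dense_iff_topologicalClosure_eq_top]
    exact Subsingleton.elim _ _
  refine dense_span_iUnion_image_of_irreducible hUmul hUone hirr ?_
  obtain ⟨v, hvD, hv0⟩ := hD.exists_mem_open isOpen_compl_singleton (exists_ne (0 : E))
  exact ⟨C v, ⟨v, hvD, rfl⟩, fun h => hv0 (hC v hvD h)⟩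

section RightAverage

variable {G V : Type*} [Group G] [MeasurableSpace G]
  [NormedAddCommGroup V] [NormedSpace ℂ V] {K : Subgroup G}

/-- The function-level form of the projection `Π` onto `H^σ`. -/
def rightAverage (ν : Measure K) (σ : K → V →L[ℂ] V) (f : G → V) (g : G) : V :=
  ∫ h, σ h (f (g * h)) ∂ν

theorem ae_ae_mul_of_ae [MeasurableMul₂ G] [MeasurableInv G] {μ : Measure G} [SFinite μ]
    [μ.IsMulLeftInvariant] {ν : Measure K} [SFinite ν] {p : G → Prop} (hp : ∀ᵐ g ∂μ, p g) :
    ∀ᵐ g ∂μ, ∀ᵐ h : K ∂ν, p (g * h) := by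
  have hmul : Measure.QuasiMeasurePreserving (fun q : G × K => q.1 * q.2) (μ.prod ν) μ :=
    QuasiMeasurePreserving.prod_of_left
      (measurable_fst.mul (measurable_subtype_coe.comp measurable_snd))
      (.of_forall fun h => quasiMeasurePreserving_mul_right μ (h : G))
  exact Measure.ae_ae_of_ae_prod (hmul.ae hp)

theorem rightAverage_ae_eq [MeasurableMul₂ G] [MeasurableInv G] {μ : Measure G} [SFinite μ]
    [μ.IsMulLeftInvariant] (ν : Measure K) [SFinite ν] (σ : K → V →L[ℂ] V) {f f' : G → V}
    (hf : f =ᵐ[μ] f') : rightAverage ν σ f =ᵐ[μ] rightAverage ν σ f' := by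
  filter_upwards [ae_ae_mul_of_ae (ν := ν) hf] with g hg
  exact integral_congr_ae (hg.mono fun h hh => congrArg (σ h) hh)

theorem rightAverage_smul_of_forall_mul_eq (ν : Measure K) (σ : K → V →L[ℂ] V) (f : G → V)
    {c : G → ℝ} (hc : ∀ g, ∀ h : K, c (g * h) = c g) (g : G) :
    rightAverage ν σ (fun g => c g • f g) g = c g • rightAverage ν σ f g := by
  simp only [rightAverage, hc, map_smul_of_tower, integral_smul]

theorem rightAverage_mul_inv [CompleteSpace V] [MeasurableMul K] (ν : Measure K)
    [ν.IsMulLeftInvariant]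
    {σ : K → V →L[ℂ] V} (hσmul : ∀ h h', σ (h * h') = σ h * σ h') {f : G → V} {g : G}
    (hint : Integrable (fun h => σ h (f (g * h))) ν) (h₀ : K) :
    rightAverage ν σ f (g * h₀⁻¹) = σ h₀ (rightAverage ν σ f g) := calc
  _ = ∫ h, σ (h₀ * h) (f (g * h₀⁻¹ * ↑(h₀ * h))) ∂ν :=
    (integral_mul_left_eq_self (fun h => σ h (f (g * h₀⁻¹ * h))) h₀).symm
  _ = ∫ h, σ h₀ (σ h (f (g * h))) ∂ν := by simp [hσmul, mul_assoc]
  _ = _ := (σ h₀).integral_comp_comm hint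

end RightAverage

section Topological

variable {G V : Type*} [Group G] [TopologicalSpace G] [IsTopologicalGroup G]
  [LocallyCompactSpace G] [SecondCountableTopology G] [MeasurableSpace G] [BorelSpace G]
  [NormedAddCommGroup V] [NormedSpace ℂ V] {K : Subgroup G} [CompactSpace K]
  (ν : Measure K) [IsFiniteMeasureOnCompacts ν] {σ : K → V →L[ℂ] V} {c : ℝ}

theorem continuous_rightAverage (hσ : ∀ h x, ‖σ h x‖ ≤ c * ‖x‖)
    (hσcont : ∀ x, Continuous fun h => σ h x) {f : G → V} (hf : Continuous f) :
    Continuous (rightAverage ν σ f) := by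
  have : SecondCountableTopology K := inferInstanceAs (SecondCountableTopology (K : Set G))
  have hjoint : Continuous fun p : G × K => σ p.2 (f (p.1 * p.2)) :=
    continuous_snd.clm_apply_of_strongly_continuous hσ hσcont
      (hf.comp (continuous_fst.mul (continuous_subtype_val.comp continuous_snd)))
  unfold rightAverage
  simpa using continuous_parametric_integral_of_continuous (μ := ν) hjoint isCompact_univ

theorem eq_rightAverage_of_ae_eq_smul (μ : Measure G) [μ.IsHaarMeasure] [SFinite ν]
    (hσ : ∀ h x, ‖σ h x‖ ≤ c * ‖x‖) (hσcont : ∀ x, Continuous fun h => σ h x)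
    {F ψ : G → V} {a : G → ℝ} (ha : ∀ g, a g ≠ 0) (haK : ∀ g, ∀ h : K, a (g * h) = a g)
    (hF : F =ᵐ[μ] rightAverage ν σ F) (hFψ : F =ᵐ[μ] fun g => a g • ψ g) (hψ : Continuous ψ) :
    ψ = rightAverage ν σ ψ := by
  refine (hψ.ae_eq_iff_eq μ (continuous_rightAverage ν hσ hσcont hψ)).mp ?_
  filter_upwards [hFψ, hF, rightAverage_ae_eq ν σ hFψ] with g hFg hFavg hFψavg
  refine smul_right_injective V (ha g) ?_
  dsimp only
  rw [← hFg, hFavg, hFψavg, rightAverage_smul_of_forall_mul_eq ν σ ψ haK]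

end Topological

theorem intertwiner_B_covariant_general
    {H : Type*} [NormedAddCommGroup H] [InnerProductSpace ℂ H] [CompleteSpace H]
    {V : Type*} [NormedAddCommGroup V] [InnerProductSpace ℂ V] [CompleteSpace V]
    {G : Type*} [Group G] [TopologicalSpace G] [IsTopologicalGroup G]
    [LocallyCompactSpace G] [SecondCountableTopology G]
    [MeasurableSpace G] [BorelSpace G]
    (μ : Measure G) [μ.IsHaarMeasure]
    -- the modular function Δ
    (Δ : G → ℝ) (hΔpos : ∀ g, 0 < Δ g) (hΔmul : ∀ g g', Δ (g * g') = Δ g * Δ g')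
    (hΔcont : Continuous Δ)
    -- the compact subgroup K with normalized Haar measure ν, and σ
    (K : Subgroup G) (hK : IsCompact (K : Set G))
    (ν : Measure K) [ν.IsHaarMeasure]
    (σ : K → (V →L[ℂ] V))
    (hσmul : ∀ h h', σ (h * h') = σ h * σ h')
    (hσunit : ∀ h, adjoint (σ h) * σ h = 1 ∧ σ h * adjoint (σ h) = 1)
    (hσcont : ∀ a : V, Continuous fun h => σ h a)
    -- the irreducible square integrable representation U with Duflo–Moore operator C
    (U : G → (H →L[ℂ] H))
    (hUmul : ∀ g g', U (g * g') = U g * U g') (hUone : U 1 = 1)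
    (hUunit : ∀ g, adjoint (U g) * U g = 1 ∧ U g * adjoint (U g) = 1)
    (hUcont : ∀ v : H, Continuous fun g => U g v)
    (hirr : ∀ S : Submodule ℂ H, IsClosed (S : Set H) →
      (∀ g, ∀ v ∈ S, U g v ∈ S) → S = ⊥ ∨ S = ⊤)
    (domC : Submodule ℂ H) (hdom : Dense (domC : Set H))
    (C : H →ₗ[ℂ] H)
    (hCinj : ∀ v ∈ domC, C v = 0 → v = 0)
    -- the representation L ⊗ I and the projection Π onto H^σ
    (L : G → (Lp V 2 μ →L[ℂ] Lp V 2 μ))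
    (Pi : Lp V 2 μ →L[ℂ] Lp V 2 μ)
    (hPi : ∀ f : Lp V 2 μ, ∀ᵐ g ∂μ,
      (Pi f : G → V) g = ∫ h : K, σ h ((f : G → V) (g * (h : G))) ∂ν)
    -- the intertwining isometry W with range in H^σ, of the stated form
    (W : H →ₗᵢ[ℂ] Lp V 2 μ)
    (hWrange : ∀ v : H, Pi (W v) = W v)
    (B : H →L[ℂ] V)
    (hWform : ∀ v ∈ domC, ∀ᵐ g ∂μ,
      (W v : G → V) g = ((Δ g ^ (-(1/2 : ℝ)) : ℝ)) • B (adjoint (U g) (C v))) :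
    ∀ h : K, B.comp (U (h : G)) = (σ h).comp B := by
  have : CompactSpace K := isCompact_iff_compactSpace.mp hK
  have hσnorm : ∀ h x, ‖σ h x‖ ≤ 1 * ‖x‖ := fun h x =>
    (one_mul ‖x‖).symm ▸ ((σ h).norm_map_iff_adjoint_comp_self.mpr (hσunit h).1 x).le
  have hUadj : ∀ g, adjoint (U g) = U g⁻¹ := fun g =>
    left_inv_eq_right_inv (hUunit g).1 (by rw [← hUmul, mul_inv_cancel, hUone])
  have hΔK : ∀ g, ∀ h : K, Δ (g * h) ^ (-(1/2 : ℝ)) = Δ g ^ (-(1/2 : ℝ)) := fun g h => by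
    rw [hΔmul, eq_one_of_bddAbove_image_subgroup hΔpos hΔmul (hK.image hΔcont).bddAbove h.2,
      mul_one]
  intro h₀
  refine ext_on (dense_span_iUnion_image_image_of_irreducible hUmul hUone hirr hdom hCinj) ?_
  rintro _ ⟨_, ⟨g, rfl⟩, _, ⟨v, hv, rfl⟩, rfl⟩
  set ψ : G → V := fun g => B (U g⁻¹ (C v))
  have hψ : Continuous ψ := B.continuous.comp ((hUcont _).comp continuous_inv)
  have hfix : ψ = rightAverage ν σ ψ := by
    refine eq_rightAverage_of_ae_eq_smul ν μ hσnorm hσcont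
      (fun g => (Real.rpow_pos_of_pos (hΔpos g) _).ne') hΔK (F := W v) ?_ ?_ hψ
    · filter_upwards [hPi (W v)] with g hg
      rwa [hWrange] at hg
    · filter_upwards [hWform v hv] with g hg
      rw [hg, hUadj]
  have hint : Integrable (fun h : K => σ h (ψ (g⁻¹ * h))) ν :=
    (continuous_id.clm_apply_of_strongly_continuous hσnorm hσcont
      (hψ.comp (continuous_const.mul continuous_subtype_val))).integrable_of_hasCompactSupport
      (HasCompactSupport.of_compactSpace _)
  calc B (U h₀ (U g (C v))) = ψ (g⁻¹ * ↑h₀⁻¹) := by simp [ψ, hUmul]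
  _ = σ h₀ (ψ g⁻¹) := by rw [hfix, rightAverage_mul_inv ν hσmul hint]
  _ = σ h₀ (B (U g (C v))) := by simp [ψ]

/-- If the isometry `W : H → H^σ ⊆ L²(G;V)` intertwines `U` with the induced
representation `L^σ` and has the form `(Wv)(g) = Δ(g)^{-1/2} B U_g* C v` on `dom C`, with
`‖B‖_HS = 1`, then `B` intertwines `U|_K` with `σ`: `B U_h = σ_h B` for all `h ∈ K`. -/
theorem intertwiner_B_covariant
    {H : Type*} [NormedAddCommGroup H] [InnerProductSpace ℂ H] [CompleteSpace H]
    [SecondCountableTopology H]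
    {ιH : Type*} (bH : HilbertBasis ιH ℂ H)
    {V : Type*} [NormedAddCommGroup V] [InnerProductSpace ℂ V] [CompleteSpace V]
    [SecondCountableTopology V]
    {G : Type*} [Group G] [TopologicalSpace G] [IsTopologicalGroup G]
    [LocallyCompactSpace G] [SecondCountableTopology G]
    [MeasurableSpace G] [BorelSpace G]
    (μ : Measure G) [μ.IsHaarMeasure]
    -- the modular function Δ
    (Δ : G → ℝ) (hΔpos : ∀ g, 0 < Δ g) (hΔmul : ∀ g g', Δ (g * g') = Δ g * Δ g')
    (hΔcont : Continuous Δ)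
    (hΔmod : ∀ (g : G) (E : Set G), MeasurableSet E →
      μ ((· * g) '' E) = ENNReal.ofReal (Δ g) * μ E)
    -- the compact subgroup K with normalized Haar measure ν, and σ
    (K : Subgroup G) (hK : IsCompact (K : Set G))
    (ν : Measure K) [ν.IsHaarMeasure] [IsProbabilityMeasure ν]
    (σ : K → (V →L[ℂ] V))
    (hσmul : ∀ h h', σ (h * h') = σ h * σ h') (hσone : σ 1 = 1)
    (hσunit : ∀ h, adjoint (σ h) * σ h = 1 ∧ σ h * adjoint (σ h) = 1)
    (hσcont : ∀ a : V, Continuous fun h => σ h a)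
    -- the irreducible square integrable representation U with Duflo–Moore operator C
    (U : G → (H →L[ℂ] H))
    (hUmul : ∀ g g', U (g * g') = U g * U g') (hUone : U 1 = 1)
    (hUunit : ∀ g, adjoint (U g) * U g = 1 ∧ U g * adjoint (U g) = 1)
    (hUcont : ∀ v : H, Continuous fun g => U g v)
    (hirr : ∀ S : Submodule ℂ H, IsClosed (S : Set H) →
      (∀ g, ∀ v ∈ S, U g v ∈ S) → S = ⊥ ∨ S = ⊤)
    (domC : Submodule ℂ H) (hdom : Dense (domC : Set H))
    (C : H →ₗ[ℂ] H)
    (hCinj : ∀ v ∈ domC, C v = 0 → v = 0)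
    (hCdomInv : ∀ (g : G), ∀ v ∈ domC, U g v ∈ domC)
    (hCcomm : ∀ (g : G), ∀ v ∈ domC,
      U g (C v) = ((Δ g ^ (-(1/2 : ℝ)) : ℝ)) • C (U g v))
    (hCorth : ∀ (u : H), ∀ v ∈ domC,
      ∫ g, (Δ g)⁻¹ * ‖⟪C v, U g u⟫_ℂ‖ ^ 2 ∂μ = ‖v‖ ^ 2 * ‖u‖ ^ 2)
    -- the representation L ⊗ I and the projection Π onto H^σ
    (L : G → (Lp V 2 μ →L[ℂ] Lp V 2 μ))
    (hL : ∀ (g : G) (f : Lp V 2 μ), ∀ᵐ x ∂μ, (L g f : G → V) x = (f : G → V) (g⁻¹ * x))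
    (Pi : Lp V 2 μ →L[ℂ] Lp V 2 μ)
    (hPi : ∀ f : Lp V 2 μ, ∀ᵐ g ∂μ,
      (Pi f : G → V) g = ∫ h : K, σ h ((f : G → V) (g * (h : G))) ∂ν)
    -- the intertwining isometry W with range in H^σ, of the stated form
    (W : H →ₗᵢ[ℂ] Lp V 2 μ)
    (hWrange : ∀ v : H, Pi (W v) = W v)
    (hWint : ∀ (g : G) (v : H), W (U g v) = L g (W v))
    (B : H →L[ℂ] V)
    (hBnorm : (Summable fun i => ‖B (bH i)‖ ^ 2) ∧ (∑' i, ‖B (bH i)‖ ^ 2) = 1)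
    (hWform : ∀ v ∈ domC, ∀ᵐ g ∂μ,
      (W v : G → V) g = ((Δ g ^ (-(1/2 : ℝ)) : ℝ)) • B (adjoint (U g) (C v))) :
    ∀ h : K, B.comp (U (h : G)) = (σ h).comp B :=
  intertwiner_B_covariant_general μ Δ hΔpos hΔmul hΔcont K hK ν σ hσmul hσunit hσcont U hUmul hUone
    hUunit hUcont hirr domC hdom C hCinj L Pi hPi W hWrange B hWform
end
end

section
/- Conversely: if U is a square integrable irreducible unitary representation of G on H with Duflo–Moore operator C, and B : H → V is Hilbert–Schmidt with ‖B‖_HS = 1 and B U_h = σ_h B for all h in the compact subgroup H, then the map W defined on dom C by (Wv)(g) = Δ(g)^{-1/2} B U_g* C v extends to an isometry from H into H^σ intertwining U with L^σ. -/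
/-!
For `v` in the domain of `C`, expanding `‖B x‖²` in a Hilbert basis `(e_j)` of `V` gives
`‖(W v)(g)‖² = ∑_j Δ(g)⁻¹ |⟪C v, U_g B* e_j⟫|²`, so the orthogonality relation yields
`‖W v‖² = ‖v‖² ∑_j ‖B* e_j‖² = ‖v‖² ‖B‖²_HS = ‖v‖²`. Hence `W` is an isometry on the dense
domain of `C` and extends to `H`. On that domain `W` intertwines `U` with left translation
because `U_g C = Δ(g)^{-1/2} C U_g` exactly compensates the modular factor, and `W v` is fixed by
`Π` because `Δ = 1` on the compact subgroup and `σ_k B U_k* = B`; both identities pass to all of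
`H` by continuity. Right translations preserve Haar-null sets, which is what allows the a.e.
defined `W v` to be averaged over `K`.
-/

open scoped InnerProductSpace ComplexConjugate
open MeasureTheory ContinuousLinearMap

noncomputable section

section HilbertSpace

variable {𝕜 E F : Type*} [RCLike 𝕜] [NormedAddCommGroup E] [InnerProductSpace 𝕜 E]
  [NormedAddCommGroup F] [InnerProductSpace 𝕜 F]

theorem Orthonormal.countable [TopologicalSpace.SeparableSpace E] {ι : Type*} {v : ι → E}
    (hv : Orthonormal 𝕜 v) : Countable ι := by
  refine Pairwise.countable_of_isOpen_disjoint (s := fun i => Metric.ball (v i) (1 / 2))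
    (fun i j hij => Metric.ball_disjoint_ball ?_) (fun _ => Metric.isOpen_ball)
    (fun i => ⟨v i, Metric.mem_ball_self (by norm_num)⟩)
  have hdist : ‖v i - v j‖ ^ 2 = 2 := by
    rw [@norm_sub_sq 𝕜, hv.inner_eq_zero hij, hv.norm_eq_one, hv.norm_eq_one]
    norm_num
  rw [dist_eq_norm]
  nlinarith [norm_nonneg (v i - v j)]

theorem HilbertBasis.hasSum_norm_inner_sq {ι : Type*} (b : HilbertBasis ι 𝕜 E) (x : E) :
    HasSum (fun i => ‖⟪b i, x⟫_𝕜‖ ^ 2) (‖x‖ ^ 2) := by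
  have h := b.hasSum_inner_mul_inner x x
  have hterm : ∀ i, ⟪x, b i⟫_𝕜 * ⟪b i, x⟫_𝕜 = ((‖⟪b i, x⟫_𝕜‖ ^ 2 : ℝ) : 𝕜) := fun i => by
    rw [← inner_conj_symm x (b i), RCLike.conj_mul]
    norm_cast
  simp only [hterm, inner_self_eq_norm_sq_to_K] at h
  exact_mod_cast h

theorem HilbertBasis.tsum_ofReal_norm_inner_sq {ι : Type*} (b : HilbertBasis ι 𝕜 E) (x : E) :
    ∑' i, ENNReal.ofReal (‖⟪b i, x⟫_𝕜‖ ^ 2) = ENNReal.ofReal (‖x‖ ^ 2) := by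
  have h := b.hasSum_norm_inner_sq x
  rw [← h.tsum_eq, ENNReal.ofReal_tsum_of_nonneg (fun _ => by positivity) h.summable]

variable [CompleteSpace E] [CompleteSpace F]

theorem ContinuousLinearMap.tsum_ofReal_norm_inner_adjoint_sq {κ : Type*}
    (bF : HilbertBasis κ 𝕜 F) (T : E →L[𝕜] F) (x : E) :
    ∑' j, ENNReal.ofReal (‖⟪adjoint T (bF j), x⟫_𝕜‖ ^ 2) = ENNReal.ofReal (‖T x‖ ^ 2) := by
  simp only [adjoint_inner_left]
  exact bF.tsum_ofReal_norm_inner_sq (T x)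

theorem ContinuousLinearMap.tsum_ofReal_norm_adjoint_sq {ι κ : Type*}
    (bE : HilbertBasis ι 𝕜 E) (bF : HilbertBasis κ 𝕜 F) (T : E →L[𝕜] F) :
    ∑' j, ENNReal.ofReal (‖adjoint T (bF j)‖ ^ 2) = ∑' i, ENNReal.ofReal (‖T (bE i)‖ ^ 2) := by
  calc ∑' j, ENNReal.ofReal (‖adjoint T (bF j)‖ ^ 2)
      = ∑' j, ∑' i, ENNReal.ofReal (‖⟪bE i, adjoint T (bF j)⟫_𝕜‖ ^ 2) := by
        simp only [bE.tsum_ofReal_norm_inner_sq]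
    _ = ∑' i, ∑' j, ENNReal.ofReal (‖⟪adjoint T (bF j), bE i⟫_𝕜‖ ^ 2) := by
        rw [ENNReal.tsum_comm]
        simp only [norm_inner_symm]
    _ = ∑' i, ENNReal.ofReal (‖T (bE i)‖ ^ 2) := by
        simp only [T.tsum_ofReal_norm_inner_adjoint_sq bF]

end HilbertSpace

theorem Submodule.exists_linearIsometry_extend_of_dense {𝕜 E F : Type*} [RCLike 𝕜]
    [NormedAddCommGroup E] [NormedSpace 𝕜 E] [NormedAddCommGroup F] [NormedSpace 𝕜 F]
    [CompleteSpace F] {D : Submodule 𝕜 E} (hD : Dense (D : Set E)) (f : D →ₗᵢ[𝕜] F) :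
    ∃ W : E →ₗᵢ[𝕜] F, ∀ v : D, W v = f v := by
  set W := f.toContinuousLinearMap.extend D.subtypeL
  have hW : ∀ v : D, W v = f v := fun v =>
    f.toContinuousLinearMap.extend_eq hD.denseRange_val
      isUniformEmbedding_subtype_val.isUniformInducing v
  have hnorm : ∀ v, ‖W v‖ = ‖v‖ := by
    refine fun v => congrFun (Continuous.ext_on hD W.continuous.norm continuous_norm ?_) v
    intro v hv
    simpa using congrArg norm (hW ⟨v, hv⟩)
  exact ⟨⟨W.toLinearMap, hnorm⟩, hW⟩

theorem exists_linearIsometry_Lp_of_dense {𝕜 E F α : Type*} [RCLike 𝕜]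
    [NormedAddCommGroup E] [NormedSpace 𝕜 E] [NormedAddCommGroup F] [NormedSpace 𝕜 F]
    [CompleteSpace F] [MeasurableSpace α] {μ : Measure α} {p : ENNReal} [Fact (1 ≤ p)]
    {D : Submodule 𝕜 E} (hD : Dense (D : Set E)) (T : E →ₗ[𝕜] α → F)
    (hT : ∀ v ∈ D, MemLp (T v) p μ) (hnorm : ∀ v ∈ D, eLpNorm (T v) p μ = ENNReal.ofReal ‖v‖) :
    ∃ W : E →ₗᵢ[𝕜] Lp F p μ, ∀ v ∈ D, W v =ᵐ[μ] T v := by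
  let f : D →ₗᵢ[𝕜] Lp F p μ :=
    { toFun := fun v => (hT v v.2).toLp
      map_add' := fun x y => by
        rw [← MemLp.toLp_add]
        exact MemLp.toLp_congr _ _ (.of_eq (by rw [Submodule.coe_add, map_add]))
      map_smul' := fun c x => by
        rw [RingHom.id_apply, ← MemLp.toLp_const_smul]
        exact MemLp.toLp_congr _ _ (.of_eq (by rw [Submodule.coe_smul, map_smul]))
      norm_map' := fun v => by
        simp [Lp.norm_toLp, hnorm v v.2] }
  obtain ⟨W, hW⟩ := D.exists_linearIsometry_extend_of_dense hD f
  exact ⟨W, fun v hv => (hW ⟨v, hv⟩).symm ▸ (hT v hv).coeFn_toLp⟩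

theorem eLpNorm_two_eq_ofReal {α E : Type*} [MeasurableSpace α] {μ : Measure α}
    [NormedAddCommGroup E] {f : α → E} {c : ℝ} (hc : 0 ≤ c)
    (h : ∫⁻ x, ‖f x‖ₑ ^ 2 ∂μ = ENNReal.ofReal (c ^ 2)) : eLpNorm f 2 μ = ENNReal.ofReal c := by
  rw [eLpNorm_eq_lintegral_rpow_enorm_toReal two_ne_zero ENNReal.ofNat_ne_top]
  simp only [ENNReal.toReal_ofNat, ENNReal.rpow_two, h]
  rw [ENNReal.ofReal_rpow_of_nonneg (by positivity) (by norm_num), ← Real.sqrt_eq_rpow,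
    Real.sqrt_sq hc]

theorem eq_one_of_isCompact_subgroup {G : Type*} [Group G] [TopologicalSpace G] {f : G → ℝ}
    (hpos : ∀ g, 0 < f g) (hmul : ∀ g g', f (g * g') = f g * f g') (hcont : Continuous f)
    {K : Subgroup G} (hK : IsCompact (K : Set G)) {k : G} (hk : k ∈ K) : f k = 1 := by
  have hone : f 1 = 1 := by
    have h := hmul 1 1
    rw [one_mul] at h
    nlinarith [hpos 1]
  have hpow : ∀ (k : G) (n : ℕ), f (k ^ n) = f k ^ n := fun k n => by
    induction n with
    | zero => simpa using hone
    | succ n ih => rw [pow_succ, hmul, ih, pow_succ]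
  obtain ⟨M, hM⟩ := (hK.image hcont).bddAbove
  have hle : ∀ k ∈ K, f k ≤ 1 := by
    intro k hk
    by_contra! hgt
    obtain ⟨n, hn⟩ := pow_unbounded_of_one_lt M hgt
    exact hn.not_ge (hpow k n ▸ hM ⟨k ^ n, pow_mem hk n, rfl⟩)
  have hinv : f k⁻¹ * f k = 1 := by rw [← hmul, inv_mul_cancel, hone]
  nlinarith [hle k hk, hle k⁻¹ (inv_mem hk), hpos k, hpos k⁻¹]

theorem ae_ae_mul_right {G K : Type*} [Group G] [TopologicalSpace G] [IsTopologicalGroup G]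
    [MeasurableSpace G] [BorelSpace G] [SecondCountableTopology G] [MeasurableSpace K]
    (μ : Measure G) [μ.IsMulLeftInvariant] [SFinite μ] (ν : Measure K) [SFinite ν]
    {φ : K → G} (hφ : Measurable φ) {p : G → Prop} (h : ∀ᵐ x ∂μ, p x) :
    ∀ᵐ g ∂μ, ∀ᵐ k ∂ν, p (g * φ k) := by
  have hqmp : Measure.QuasiMeasurePreserving (fun z : G × K => z.1 * φ z.2) (μ.prod ν) μ :=
    QuasiMeasurePreserving.prod_of_left (measurable_fst.mul (hφ.comp measurable_snd))
      (.of_forall fun k => quasiMeasurePreserving_mul_right μ (φ k))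
  exact Measure.ae_ae_of_ae_prod (hqmp.ae h)

theorem ae_integral_comp_mul_right_eq_of_invariant {G K V : Type*} [Group G]
    [TopologicalSpace G] [IsTopologicalGroup G] [MeasurableSpace G] [BorelSpace G]
    [SecondCountableTopology G] [MeasurableSpace K] [NormedAddCommGroup V] [NormedSpace ℝ V]
    [CompleteSpace V]
    (μ : Measure G) [μ.IsMulLeftInvariant] [SFinite μ] (ν : Measure K) [IsProbabilityMeasure ν]
    {φ : K → G} (hφ : Measurable φ) (σ : K → V → V) {f F : G → V} (hfF : f =ᵐ[μ] F)
    (hF : ∀ g k, σ k (F (g * φ k)) = F g) :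
    ∀ᵐ g ∂μ, ∫ k, σ k (f (g * φ k)) ∂ν = f g := by
  filter_upwards [hfF, ae_ae_mul_right μ ν hφ hfF] with g hg hgk
  have hσ : (fun k => σ k (f (g * φ k))) =ᵐ[ν] fun _ => F g :=
    hgk.mono fun k hk => by simp only [hk, hF]
  rw [integral_congr_ae hσ, integral_const, probReal_univ, one_smul, hg]

section Representation

variable {H V G : Type*} [NormedAddCommGroup H] [InnerProductSpace ℂ H]
  [NormedAddCommGroup V] [InnerProductSpace ℂ V] {Δ : G → ℝ} {U : G → H →L[ℂ] H}

theorem lintegral_ofReal_orthogonality [MeasurableSpace G] {μ : Measure G}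
    (hΔpos : ∀ g, 0 < Δ g) (C : H →ₗ[ℂ] H) {v : H} (u : H)
    (hv : ∫ g, (Δ g)⁻¹ * ‖⟪C v, U g u⟫_ℂ‖ ^ 2 ∂μ = ‖v‖ ^ 2 * ‖u‖ ^ 2) :
    ∫⁻ g, ENNReal.ofReal ((Δ g)⁻¹ * ‖⟪C v, U g u⟫_ℂ‖ ^ 2) ∂μ =
      ENNReal.ofReal (‖v‖ ^ 2 * ‖u‖ ^ 2) := by
  by_cases hvu : v = 0 ∨ u = 0
  · rcases hvu with rfl | rfl <;> simp
  rw [not_or] at hvu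
  have hint := Integrable.of_integral_ne_zero (μ := μ)
    (f := fun g => (Δ g)⁻¹ * ‖⟪C v, U g u⟫_ℂ‖ ^ 2) (by rw [hv]; simp [hvu.1, hvu.2])
  rw [← hv, ofReal_integral_eq_lintegral_ofReal hint
    (ae_of_all _ fun g => mul_nonneg (inv_nonneg.2 (hΔpos g).le) (sq_nonneg _))]

variable [CompleteSpace H]


def coeffMap (Δ : G → ℝ) (U : G → H →L[ℂ] H) (B : H →L[ℂ] V) : H →ₗ[ℂ] G → V where
  toFun w g := (Δ g ^ (-(1/2 : ℝ)) : ℝ) • B (adjoint (U g) w)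
  map_add' _ _ := by
    funext g
    simp only [map_add, smul_add, Pi.add_apply]
  map_smul' _ _ := by
    funext g
    simp only [map_smul, Pi.smul_apply, RingHom.id_apply]
    exact smul_comm _ _ _

theorem coeffMap_apply (Δ : G → ℝ) (U : G → H →L[ℂ] H) (B : H →L[ℂ] V) (w : H) (g : G) :
    coeffMap Δ U B w g = (Δ g ^ (-(1/2 : ℝ)) : ℝ) • B (adjoint (U g) w) :=
  rfl

theorem adjoint_eq_map_inv [Group G] (hUmul : ∀ g g', U (g * g') = U g * U g') (hUone : U 1 = 1)
    (hUunit : ∀ g, adjoint (U g) * U g = 1) (g : G) : adjoint (U g) = U g⁻¹ := by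
  calc adjoint (U g) = adjoint (U g) * (U g * U g⁻¹) := by rw [← hUmul, mul_inv_cancel, hUone, mul_one]
    _ = U g⁻¹ := by rw [← mul_assoc, hUunit, one_mul]

theorem continuous_coeffMap [Group G] [TopologicalSpace G] [IsTopologicalGroup G] (B : H →L[ℂ] V)
    (hΔpos : ∀ g, 0 < Δ g) (hΔcont : Continuous Δ) (hadj : ∀ g, adjoint (U g) = U g⁻¹)
    (hUcont : ∀ v : H, Continuous fun g => U g v) (w : H) : Continuous (coeffMap Δ U B w) := by
  have h : coeffMap Δ U B w = fun g => (Δ g ^ (-(1/2 : ℝ)) : ℝ) • B (U g⁻¹ w) := by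
    funext g
    rw [coeffMap_apply, hadj]
  rw [h]
  exact (hΔcont.rpow_const fun g => .inl (hΔpos g).ne').smul
    (B.continuous.comp ((hUcont w).comp continuous_inv))

theorem rpow_neg_half_sq {x : ℝ} (hx : 0 < x) : (x ^ (-(1/2 : ℝ))) ^ 2 = x⁻¹ := by
  rw [← Real.rpow_natCast, ← Real.rpow_mul hx.le]
  norm_num [Real.rpow_neg_one]

theorem enorm_coeffMap_sq [CompleteSpace V] {κ : Type*} (bV : HilbertBasis κ ℂ V) (B : H →L[ℂ] V)
    (hΔpos : ∀ g, 0 < Δ g) (w : H) (g : G) :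
    ‖coeffMap Δ U B w g‖ₑ ^ 2 =
      ∑' j, ENNReal.ofReal ((Δ g)⁻¹ * ‖⟪w, U g (adjoint B (bV j))⟫_ℂ‖ ^ 2) := by
  have hinv : 0 ≤ (Δ g)⁻¹ := inv_nonneg.2 (hΔpos g).le
  have hnorm : ‖coeffMap Δ U B w g‖ ^ 2 = (Δ g)⁻¹ * ‖B (adjoint (U g) w)‖ ^ 2 := by
    rw [coeffMap_apply, norm_smul, mul_pow, Real.norm_of_nonneg (Real.rpow_nonneg (hΔpos g).le _),
      rpow_neg_half_sq (hΔpos g)]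
  calc ‖coeffMap Δ U B w g‖ₑ ^ 2 = ENNReal.ofReal (‖coeffMap Δ U B w g‖ ^ 2) := by
        rw [ENNReal.ofReal_pow (norm_nonneg _), ofReal_norm]
    _ = ENNReal.ofReal (Δ g)⁻¹ *
          ∑' j, ENNReal.ofReal (‖⟪adjoint B (bV j), adjoint (U g) w⟫_ℂ‖ ^ 2) := by
        rw [hnorm, ENNReal.ofReal_mul hinv, B.tsum_ofReal_norm_inner_adjoint_sq]
    _ = _ := by
        simp only [← ENNReal.tsum_mul_left, ← ENNReal.ofReal_mul hinv, adjoint_inner_right,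
          norm_inner_symm w]

theorem eLpNorm_coeffMap [CompleteSpace V] [TopologicalSpace.SeparableSpace V]
    [TopologicalSpace G] [MeasurableSpace G] [OpensMeasurableSpace G] (μ : Measure G)
    {ιH : Type*} (bH : HilbertBasis ιH ℂ H) (B : H →L[ℂ] V)
    (hBsum : Summable fun i => ‖B (bH i)‖ ^ 2) (hBnorm : ∑' i, ‖B (bH i)‖ ^ 2 = 1)
    (hΔpos : ∀ g, 0 < Δ g) (hΔcont : Continuous Δ) (hUcont : ∀ v : H, Continuous fun g => U g v)
    (C : H →ₗ[ℂ] H) {v : H}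
    (hv : ∀ u, ∫ g, (Δ g)⁻¹ * ‖⟪C v, U g u⟫_ℂ‖ ^ 2 ∂μ = ‖v‖ ^ 2 * ‖u‖ ^ 2) :
    eLpNorm (coeffMap Δ U B (C v)) 2 μ = ENNReal.ofReal ‖v‖ := by
  obtain ⟨w, bV, -⟩ := exists_hilbertBasis ℂ V
  have : Countable w := bV.orthonormal.countable
  have hHS : ∑' j, ENNReal.ofReal (‖adjoint B (bV j)‖ ^ 2) = 1 := by
    rw [B.tsum_ofReal_norm_adjoint_sq bH bV,
      ← ENNReal.ofReal_tsum_of_nonneg (fun _ => sq_nonneg _) hBsum, hBnorm, ENNReal.ofReal_one]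
  have hmeas : ∀ u : H, Measurable fun g => ENNReal.ofReal ((Δ g)⁻¹ * ‖⟪C v, U g u⟫_ℂ‖ ^ 2) :=
    fun u => ((hΔcont.inv₀ fun g => (hΔpos g).ne').mul
      ((continuous_const.inner (hUcont u)).norm.pow 2)).measurable.ennreal_ofReal
  refine eLpNorm_two_eq_ofReal (norm_nonneg v) ?_
  calc ∫⁻ g, ‖coeffMap Δ U B (C v) g‖ₑ ^ 2 ∂μ
      = ∑' j, ∫⁻ g, ENNReal.ofReal ((Δ g)⁻¹ * ‖⟪C v, U g (adjoint B (bV j))⟫_ℂ‖ ^ 2) ∂μ := by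
        simp only [enorm_coeffMap_sq bV B hΔpos]
        exact lintegral_tsum fun j => (hmeas _).aemeasurable
    _ = ∑' j, ENNReal.ofReal (‖v‖ ^ 2) * ENNReal.ofReal (‖adjoint B (bV j)‖ ^ 2) := by
        simp only [lintegral_ofReal_orthogonality hΔpos C _ (hv _),
          ENNReal.ofReal_mul (sq_nonneg _)]
    _ = ENNReal.ofReal (‖v‖ ^ 2) := by
        rw [ENNReal.tsum_mul_left, hHS, mul_one]

theorem coeffMap_mul_left [Group G] (B : H →L[ℂ] V) (hΔpos : ∀ g, 0 < Δ g)
    (hΔmul : ∀ g g', Δ (g * g') = Δ g * Δ g') (hUmul : ∀ g g', U (g * g') = U g * U g')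
    (hUunit : ∀ g, adjoint (U g) * U g = 1) (C : H →ₗ[ℂ] H) {g₀ : G} {v : H}
    (hC : U g₀ (C v) = (Δ g₀ ^ (-(1/2 : ℝ)) : ℝ) • C (U g₀ v)) (y : G) :
    coeffMap Δ U B (C (U g₀ v)) (g₀ * y) = coeffMap Δ U B (C v) y := by
  have hCU : C (U g₀ v) = (Δ g₀ ^ (1/2 : ℝ) : ℝ) • U g₀ (C v) := by
    rw [hC, smul_smul, ← Real.rpow_add (hΔpos g₀)]
    norm_num
  have hscalar : Δ (g₀ * y) ^ (-(1/2 : ℝ)) * Δ g₀ ^ (1/2 : ℝ) = Δ y ^ (-(1/2 : ℝ)) := by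
    rw [hΔmul, Real.mul_rpow (hΔpos g₀).le (hΔpos y).le, mul_right_comm,
      ← Real.rpow_add (hΔpos g₀)]
    norm_num
  have hadj : adjoint (U (g₀ * y)) (U g₀ (C v)) = adjoint (U y) (C v) := by
    have h := congrArg (adjoint (U y)) (DFunLike.congr_fun (hUunit g₀) (C v))
    rw [hUmul, ← star_eq_adjoint, star_mul, star_eq_adjoint, star_eq_adjoint]
    simpa only [mul_apply_eq_comp, one_apply_eq_self] using h
  rw [coeffMap_apply, coeffMap_apply, hCU, map_smul_of_tower, map_smul_of_tower, smul_smul,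
    hscalar, hadj]

theorem map_coeffMap_mul_right [Group G] (B : H →L[ℂ] V)
    (hΔmul : ∀ g g', Δ (g * g') = Δ g * Δ g') (hUmul : ∀ g g', U (g * g') = U g * U g')
    {k : G} (hΔk : Δ k = 1) (hUk : U k * adjoint (U k) = 1) {S : V →L[ℂ] V}
    (hBS : B.comp (U k) = S.comp B) (w : H) (g : G) :
    S (coeffMap Δ U B w (g * k)) = coeffMap Δ U B w g := by
  have hB : S (B (adjoint (U (g * k)) w)) = B (adjoint (U g) w) := by
    have h := congrArg B (DFunLike.congr_fun hUk (adjoint (U g) w))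
    rw [hUmul, ← star_eq_adjoint, star_mul, star_eq_adjoint, star_eq_adjoint, mul_apply_eq_comp,
      ← comp_apply S B, ← hBS]
    simpa only [comp_apply, mul_apply_eq_comp, one_apply_eq_self] using h
  rw [coeffMap_apply, coeffMap_apply, map_smul_of_tower, hB, hΔmul, hΔk, mul_one]

end Representation

theorem intertwiner_from_B_general
    {H : Type*} [NormedAddCommGroup H] [InnerProductSpace ℂ H] [CompleteSpace H]
    {ιH : Type*} (bH : HilbertBasis ιH ℂ H)
    {V : Type*} [NormedAddCommGroup V] [InnerProductSpace ℂ V] [CompleteSpace V]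
    [SecondCountableTopology V]
    {G : Type*} [Group G] [TopologicalSpace G] [IsTopologicalGroup G]
    [LocallyCompactSpace G] [SecondCountableTopology G]
    [MeasurableSpace G] [BorelSpace G]
    (μ : Measure G) [μ.IsHaarMeasure]
    -- the modular function Δ
    (Δ : G → ℝ) (hΔpos : ∀ g, 0 < Δ g) (hΔmul : ∀ g g', Δ (g * g') = Δ g * Δ g')
    (hΔcont : Continuous Δ)
    -- the compact subgroup K with normalized Haar measure ν, and σ
    (K : Subgroup G) (hK : IsCompact (K : Set G))
    (ν : Measure K) [IsProbabilityMeasure ν]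
    (σ : K → (V →L[ℂ] V))
    -- the irreducible square integrable representation U with Duflo–Moore operator C
    (U : G → (H →L[ℂ] H))
    (hUmul : ∀ g g', U (g * g') = U g * U g') (hUone : U 1 = 1)
    (hUunit : ∀ g, adjoint (U g) * U g = 1 ∧ U g * adjoint (U g) = 1)
    (hUcont : ∀ v : H, Continuous fun g => U g v)
    (domC : Submodule ℂ H) (hdom : Dense (domC : Set H))
    (C : H →ₗ[ℂ] H)
    (hCdomInv : ∀ (g : G), ∀ v ∈ domC, U g v ∈ domC)
    (hCcomm : ∀ (g : G), ∀ v ∈ domC,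
      U g (C v) = ((Δ g ^ (-(1/2 : ℝ)) : ℝ)) • C (U g v))
    (hCorth : ∀ (u : H), ∀ v ∈ domC,
      ∫ g, (Δ g)⁻¹ * ‖⟪C v, U g u⟫_ℂ‖ ^ 2 ∂μ = ‖v‖ ^ 2 * ‖u‖ ^ 2)
    -- the representation L ⊗ I and the projection Π onto H^σ
    (L : G → (Lp V 2 μ →L[ℂ] Lp V 2 μ))
    (hL : ∀ (g : G) (f : Lp V 2 μ), ∀ᵐ x ∂μ, (L g f : G → V) x = (f : G → V) (g⁻¹ * x))
    (Pi : Lp V 2 μ →L[ℂ] Lp V 2 μ)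
    (hPi : ∀ f : Lp V 2 μ, ∀ᵐ g ∂μ,
      (Pi f : G → V) g = ∫ h : K, σ h ((f : G → V) (g * (h : G))) ∂ν)
    -- the Hilbert–Schmidt intertwiner B
    (B : H →L[ℂ] V)
    (hBsum : Summable fun i => ‖B (bH i)‖ ^ 2) (hBnorm : (∑' i, ‖B (bH i)‖ ^ 2) = 1)
    (hBint : ∀ h : K, B.comp (U (h : G)) = (σ h).comp B) :
    ∃ W : H →ₗᵢ[ℂ] Lp V 2 μ,
      (∀ v ∈ domC, ∀ᵐ g ∂μ,
        (W v : G → V) g = ((Δ g ^ (-(1/2 : ℝ)) : ℝ)) • B (adjoint (U g) (C v))) ∧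
      (∀ v : H, Pi (W v) = W v) ∧
      (∀ (g : G) (v : H), W (U g v) = L g (W v)) := by
  have hcont := continuous_coeffMap B hΔpos hΔcont
    (adjoint_eq_map_inv hUmul hUone fun g => (hUunit g).1) hUcont
  have hnorm : ∀ v ∈ domC, eLpNorm (coeffMap Δ U B (C v)) 2 μ = ENNReal.ofReal ‖v‖ :=
    fun v hv => eLpNorm_coeffMap μ bH B hBsum hBnorm hΔpos hΔcont hUcont C (hCorth · v hv)
  obtain ⟨W, hW⟩ := exists_linearIsometry_Lp_of_dense hdom ((coeffMap Δ U B).comp C)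
    (fun v hv => ⟨(hcont _).aestronglyMeasurable, hnorm v hv ▸ ENNReal.ofReal_lt_top⟩) hnorm
  refine ⟨W, hW, fun v => ?_, fun g v => ?_⟩
  · refine congrFun (Continuous.ext_on hdom (Pi.continuous.comp W.continuous) W.continuous
      fun v hv => ?_) v
    apply Lp.ext
    filter_upwards [hPi (W v), ae_integral_comp_mul_right_eq_of_invariant μ ν
      measurable_subtype_coe (σ ·) (hW v hv) fun g k => map_coeffMap_mul_right B hΔmul hUmul
        (eq_one_of_isCompact_subgroup hΔpos hΔmul hΔcont hK k.2) (hUunit k).2 (hBint k) _ g]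
      with g hPig havg
    rw [Function.comp_apply, hPig, havg]
  · refine congrFun (Continuous.ext_on hdom (W.continuous.comp (U g).continuous)
      ((L g).continuous.comp W.continuous) fun v hv => ?_) v
    apply Lp.ext
    filter_upwards [hW _ (hCdomInv g v hv), hL g (W v),
      (measurePreserving_mul_left μ g⁻¹).quasiMeasurePreserving.ae (hW v hv)] with x h1 h2 h3
    rw [Function.comp_apply, h1, Function.comp_apply, h2, h3]
    simpa only [LinearMap.comp_apply, mul_inv_cancel_left] using
      coeffMap_mul_left B hΔpos hΔmul hUmul (fun g => (hUunit g).1) C (hCcomm g v hv) (g⁻¹ * x)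

/-- Conversely, if `U` is square integrable with Duflo–Moore operator `C`
and `B : H → V` is Hilbert–Schmidt with `‖B‖_HS = 1` and `B U_h = σ_h B` for all `h` in the
compact subgroup `K`, then `(Wv)(g) = Δ(g)^{-1/2} B U_g* C v` (for `v ∈ dom C`) extends to an
isometry `W : H → H^σ` intertwining `U` with `L^σ`. -/
theorem intertwiner_from_B
    {H : Type*} [NormedAddCommGroup H] [InnerProductSpace ℂ H] [CompleteSpace H]
    [SecondCountableTopology H]
    {ιH : Type*} (bH : HilbertBasis ιH ℂ H)
    {V : Type*} [NormedAddCommGroup V] [InnerProductSpace ℂ V] [CompleteSpace V]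
    [SecondCountableTopology V]
    {G : Type*} [Group G] [TopologicalSpace G] [IsTopologicalGroup G]
    [LocallyCompactSpace G] [SecondCountableTopology G]
    [MeasurableSpace G] [BorelSpace G]
    (μ : Measure G) [μ.IsHaarMeasure]
    -- the modular function Δ
    (Δ : G → ℝ) (hΔpos : ∀ g, 0 < Δ g) (hΔmul : ∀ g g', Δ (g * g') = Δ g * Δ g')
    (hΔcont : Continuous Δ)
    (hΔmod : ∀ (g : G) (E : Set G), MeasurableSet E →
      μ ((· * g) '' E) = ENNReal.ofReal (Δ g) * μ E)
    -- the compact subgroup K with normalized Haar measure ν, and σ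
    (K : Subgroup G) (hK : IsCompact (K : Set G))
    (ν : Measure K) [ν.IsHaarMeasure] [IsProbabilityMeasure ν]
    (σ : K → (V →L[ℂ] V))
    (hσmul : ∀ h h', σ (h * h') = σ h * σ h') (hσone : σ 1 = 1)
    (hσunit : ∀ h, adjoint (σ h) * σ h = 1 ∧ σ h * adjoint (σ h) = 1)
    (hσcont : ∀ a : V, Continuous fun h => σ h a)
    -- the irreducible square integrable representation U with Duflo–Moore operator C
    (U : G → (H →L[ℂ] H))
    (hUmul : ∀ g g', U (g * g') = U g * U g') (hUone : U 1 = 1)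
    (hUunit : ∀ g, adjoint (U g) * U g = 1 ∧ U g * adjoint (U g) = 1)
    (hUcont : ∀ v : H, Continuous fun g => U g v)
    (hirr : ∀ S : Submodule ℂ H, IsClosed (S : Set H) →
      (∀ g, ∀ v ∈ S, U g v ∈ S) → S = ⊥ ∨ S = ⊤)
    (hsq : ∃ v : H, v ≠ 0 ∧ MemLp (fun g => ⟪v, U g v⟫_ℂ) 2 μ)
    (domC : Submodule ℂ H) (hdom : Dense (domC : Set H))
    (C : H →ₗ[ℂ] H)
    (hCinj : ∀ v ∈ domC, C v = 0 → v = 0)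
    (hCdomInv : ∀ (g : G), ∀ v ∈ domC, U g v ∈ domC)
    (hCcomm : ∀ (g : G), ∀ v ∈ domC,
      U g (C v) = ((Δ g ^ (-(1/2 : ℝ)) : ℝ)) • C (U g v))
    (hCorth : ∀ (u : H), ∀ v ∈ domC,
      ∫ g, (Δ g)⁻¹ * ‖⟪C v, U g u⟫_ℂ‖ ^ 2 ∂μ = ‖v‖ ^ 2 * ‖u‖ ^ 2)
    -- the representation L ⊗ I and the projection Π onto H^σ
    (L : G → (Lp V 2 μ →L[ℂ] Lp V 2 μ))
    (hL : ∀ (g : G) (f : Lp V 2 μ), ∀ᵐ x ∂μ, (L g f : G → V) x = (f : G → V) (g⁻¹ * x))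
    (Pi : Lp V 2 μ →L[ℂ] Lp V 2 μ)
    (hPi : ∀ f : Lp V 2 μ, ∀ᵐ g ∂μ,
      (Pi f : G → V) g = ∫ h : K, σ h ((f : G → V) (g * (h : G))) ∂ν)
    -- the Hilbert–Schmidt intertwiner B
    (B : H →L[ℂ] V)
    (hBsum : Summable fun i => ‖B (bH i)‖ ^ 2) (hBnorm : (∑' i, ‖B (bH i)‖ ^ 2) = 1)
    (hBint : ∀ h : K, B.comp (U (h : G)) = (σ h).comp B) :
    ∃ W : H →ₗᵢ[ℂ] Lp V 2 μ,
      (∀ v ∈ domC, ∀ᵐ g ∂μ,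
        (W v : G → V) g = ((Δ g ^ (-(1/2 : ℝ)) : ℝ)) • B (adjoint (U g) (C v))) ∧
      (∀ v : H, Pi (W v) = W v) ∧
      (∀ (g : G) (v : H), W (U g v) = L g (W v)) :=
  intertwiner_from_B_general bH μ Δ hΔpos hΔmul hΔcont K hK ν σ U hUmul hUone hUunit hUcont domC
    hdom C hCdomInv hCcomm hCorth L hL Pi hPi B hBsum hBnorm hBint
end
end
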